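/- arXiv:0907.2595 — 2 statements merged into one kernel-verified Lean document; each statement's English description precedes it below -/
import Mathlib

section
/- Let F be a positive-integer sequence with F_0 = 1 and let P_n be the finite cobweb poset on levels 0 through n. The characteristic polynomial χ_{P_n}(t) = ∑_{x ∈ P_n} μ(0,x) t^{n - rank(x)} equals ∑_{k=0}^{n} (-1)^k F_k t^{n-k} ∏_{r=1}^{k-1}(F_r - 1) (where the empty product is 1). -/
/-!
Since `x < y` depends only on the levels, `μ(0, x)` depends only on `k = rank x`; call it `m k`.
The defining recursion `μ(0, x) = -∑_{z < x} μ(0, z)` groups by level into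
`m (k + 1) = -∑_{j ≤ k} F_j m j`, and subtracting consecutive instances gives
`m (k + 1) = -(F_k - 1) m k`, i.e. `m k = (-1)^k ∏_{r=1}^{k-1} (F_r - 1)`.
Grouping `χ` by level then gives the formula.
-/

open Finset

def cobwebMobius (F : ℕ → ℕ) (k : ℕ) : ℤ :=
  (-1) ^ k * ∏ r ∈ Ico 1 k, ((F r : ℤ) - 1)

lemma cobwebMobius_succ (F : ℕ → ℕ) (hF0 : F 0 = 1) (k : ℕ) :
    cobwebMobius F (k + 1) = -∑ j ∈ range (k + 1), (F j : ℤ) * cobwebMobius F j := by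
  induction k with
  | zero => simp [cobwebMobius, hF0]
  | succ k ih =>
    have hstep : cobwebMobius F (k + 2) = -((F (k + 1) : ℤ) - 1) * cobwebMobius F (k + 1) := by
      rw [cobwebMobius, cobwebMobius, prod_Ico_succ_top (by omega : 1 ≤ k + 1)]
      ring
    rw [hstep, sum_range_succ, neg_add, ← ih]
    ring

section Levels

variable {α : Type*} [Fintype α] {lvl : α → ℕ} {Φ : ℕ → Finset α}

lemma sum_filter_level_lt (hΦ : ∀ (k : ℕ) (x : α), x ∈ Φ k ↔ lvl x = k) (c : ℕ → ℤ) (m : ℕ) :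
    ∑ x ∈ univ.filter (fun x => lvl x < m), c (lvl x) = ∑ j ∈ range m, (#(Φ j) : ℤ) * c j := by
  rw [← sum_fiberwise_of_maps_to' (t := range m) (fun x hx => by simpa using hx)]
  refine sum_congr rfl fun j hj => ?_
  have hfiber : (univ.filter fun x => lvl x < m).filter (fun x => lvl x = j) = Φ j := by
    ext x
    simp only [mem_filter, mem_univ, true_and, hΦ]
    constructor
    · exact And.right
    · rintro rfl
      exact ⟨mem_range.mp hj, rfl⟩
  rw [hfiber, sum_const, nsmul_eq_mul]

variable [PartialOrder α] [LocallyFiniteOrder α] (hord : ∀ x y : α, x < y ↔ lvl x < lvl y)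
include hord

lemma Ico_eq_filter_level_lt {z₀ : α} (hbot : ∀ z, z₀ ≤ z) (x : α) :
    Ico z₀ x = univ.filter (fun z => lvl z < lvl x) := by
  ext z
  simp [hbot, hord]

lemma mobius_eq_cobwebMobius (F : ℕ → ℕ) (hF0 : F 0 = 1) (n : ℕ)
    (hlvl_le : ∀ x : α, lvl x ≤ n)
    (hΦ : ∀ (k : ℕ) (x : α), x ∈ Φ k ↔ lvl x = k)
    (hcard : ∀ k : ℕ, k ≤ n → #(Φ k) = F k)
    (mu : α → α → ℤ) (hmu_refl : ∀ x : α, mu x x = 1)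
    (hmu_rec : ∀ x y : α, x < y → mu x y = -∑ z ∈ Ico x y, mu x z)
    {z₀ : α} (hz₀ : ∀ x, lvl x = 0 ↔ x = z₀) (x : α) :
    mu z₀ x = cobwebMobius F (lvl x) := by
  have hz₀_lvl : lvl z₀ = 0 := (hz₀ z₀).mpr rfl
  have hbot : ∀ z, z₀ ≤ z := fun z => by
    rcases Nat.eq_zero_or_pos (lvl z) with h | h
    · exact ((hz₀ z).mp h).ge
    · exact ((hord z₀ z).mpr (hz₀_lvl ▸ h)).le
  induction hx : lvl x using Nat.strong_induction_on generalizing x with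
  | _ m ih =>
    cases m with
    | zero => simp [(hz₀ x).mp hx, hmu_refl, cobwebMobius]
    | succ k =>
      have hlt : z₀ < x := (hord z₀ x).mpr (by omega)
      have hbelow : ∀ z ∈ univ.filter (fun z => lvl z < k + 1),
          mu z₀ z = cobwebMobius F (lvl z) := fun z hz =>
        ih (lvl z) (mem_filter.mp hz).2 z rfl
      rw [hmu_rec z₀ x hlt, Ico_eq_filter_level_lt hord hbot, hx, sum_congr rfl hbelow,
        sum_filter_level_lt hΦ, cobwebMobius_succ F hF0]
      refine congrArg _ (sum_congr rfl fun j hj => ?_)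
      rw [hcard j (by have := hlvl_le x; have := mem_range.mp hj; omega)]

end Levels

theorem cobweb_characteristic_polynomial_general {α : Type*} [PartialOrder α] [Fintype α]
    [LocallyFiniteOrder α]
    (F : ℕ → ℕ) (hF0 : F 0 = 1)
    (n : ℕ)
    (lvl : α → ℕ) (Φ : ℕ → Finset α)
    (hlvl_le : ∀ x : α, lvl x ≤ n)
    (hord : ∀ x y : α, x < y ↔ lvl x < lvl y)
    (hΦ : ∀ (k : ℕ) (x : α), x ∈ Φ k ↔ lvl x = k)
    (hcard : ∀ k : ℕ, k ≤ n → (Φ k).card = F k)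
    (mu : α → α → ℤ)
    (hmu_refl : ∀ x : α, mu x x = 1)
    (hmu_rec : ∀ x y : α, x < y → mu x y = -∑ z ∈ Finset.Ico x y, mu x z)
    (z₀ : α) (hz₀ : z₀ ∈ Φ 0)
    (t : ℤ) :
    ∑ x : α, mu z₀ x * t ^ (n - lvl x) =
      ∑ k ∈ Finset.range (n + 1),
        (-1 : ℤ) ^ k * (F k : ℤ) * t ^ (n - k) *
          ∏ r ∈ Finset.Ico 1 k, ((F r : ℤ) - 1) := by
  have hz₀_unique : ∀ x, lvl x = 0 ↔ x = z₀ := fun x => by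
    refine ⟨fun hx => card_le_one.mp ?_ x ((hΦ 0 x).mpr hx) z₀ hz₀, fun h => h ▸ (hΦ 0 z₀).mp hz₀⟩
    rw [hcard 0 n.zero_le, hF0]
  have hmu := mobius_eq_cobwebMobius hord F hF0 n hlvl_le hΦ hcard mu hmu_refl hmu_rec hz₀_unique
  calc ∑ x : α, mu z₀ x * t ^ (n - lvl x)
      = ∑ x ∈ univ.filter (fun x => lvl x < n + 1),
          (fun k => cobwebMobius F k * t ^ (n - k)) (lvl x) := by
        rw [filter_true_of_mem fun x _ => Nat.lt_succ_of_le (hlvl_le x)]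
        simp only [hmu]
    _ = ∑ k ∈ range (n + 1), (#(Φ k) : ℤ) * (cobwebMobius F k * t ^ (n - k)) :=
        sum_filter_level_lt hΦ (fun k => cobwebMobius F k * t ^ (n - k)) (n + 1)
    _ = _ := sum_congr rfl fun k hk => by
        rw [hcard k (Nat.lt_succ_iff.mp (mem_range.mp hk)), cobwebMobius]
        ring

/-- Characteristic polynomial of the finite cobweb poset `P_n` (levels `0,…,n`,
`F 0 = 1`, unique minimal element `z₀`):
`χ(t) = ∑_{x} μ(z₀,x) t^(n - rank x) = ∑_{k=0}^{n} (-1)^k F_k t^(n-k) ∏_{r=1}^{k-1}(F_r - 1)`. -/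
theorem cobweb_characteristic_polynomial {α : Type*} [PartialOrder α] [Fintype α]
    [LocallyFiniteOrder α]
    (F : ℕ → ℕ) (hF : ∀ k, 0 < F k) (hF0 : F 0 = 1)
    (n : ℕ)
    (lvl : α → ℕ) (Φ : ℕ → Finset α)
    (hlvl_le : ∀ x : α, lvl x ≤ n)
    (hord : ∀ x y : α, x < y ↔ lvl x < lvl y)
    (hΦ : ∀ (k : ℕ) (x : α), x ∈ Φ k ↔ lvl x = k)
    (hcard : ∀ k : ℕ, k ≤ n → (Φ k).card = F k)
    (mu : α → α → ℤ)
    (hmu_refl : ∀ x : α, mu x x = 1)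
    (hmu_rec : ∀ x y : α, x < y → mu x y = -∑ z ∈ Finset.Ico x y, mu x z)
    (z₀ : α) (hz₀ : z₀ ∈ Φ 0)
    (t : ℤ) :
    ∑ x : α, mu z₀ x * t ^ (n - lvl x) =
      ∑ k ∈ Finset.range (n + 1),
        (-1 : ℤ) ^ k * (F k : ℤ) * t ^ (n - k) *
          ∏ r ∈ Finset.Ico 1 k, ((F r : ℤ) - 1) :=
  cobweb_characteristic_polynomial_general F hF0 n lvl Φ hlvl_le hord hΦ hcard mu hmu_refl hmu_rec
    z₀ hz₀ t
end

section
/- In a cobweb poset, the convolution inverse of the ζ function in the incidence algebra is the function μ given by μ(x,y) = [x = y] · 1 + [rank(y) > rank(x)] · (-1)^{rank(y)-rank(x)} · ∏_{i=rank(x)+1}^{rank(y)-1}(F_i - 1); i.e., ∑_{x ≤ z ≤ y} μ(x,z) = [x = y] for all x ≤ y. -/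
open Finset

/-- The explicit Möbius function of a cobweb poset:
`μ(x,y) = [x = y] + [rank y > rank x] (-1)^(rank y - rank x) ∏_{i=rank x+1}^{rank y-1}(F i - 1)`. -/
noncomputable def cobwebMu {α : Type*} [DecidableEq α] (F : ℕ → ℕ) (lvl : α → ℕ)
    (x y : α) : ℤ :=
  if x = y then 1
  else if lvl x < lvl y then
    (-1 : ℤ) ^ (lvl y - lvl x) * ∏ i ∈ Finset.Ico (lvl x + 1) (lvl y), ((F i : ℤ) - 1)
  else 0

/-!
`Icc x y` splits into `x`, `y` and the full levels strictly between them, and `μ(x, ·)` is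
constant on each level. So the claim reduces to a numerical identity in the level sizes:
the partial sums `1 + ∑_{a<k<n} F k μ_k` equal `-μ_n`, since adding the next term gives
`(F n - 1) μ_n = -μ_{n+1}`.
-/

theorem one_add_sum_mul_alternating_prod {R : Type*} [CommRing R] (f : ℕ → R) {a b : ℕ}
    (hab : a < b) :
    1 + ∑ k ∈ Ico (a + 1) b, f k * ((-1) ^ (k - a) * ∏ i ∈ Ico (a + 1) k, (f i - 1)) =
      -((-1) ^ (b - a) * ∏ i ∈ Ico (a + 1) b, (f i - 1)) := by
  induction b, hab using Nat.le_induction with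
  | base => simp
  | succ n hn ih =>
    rw [sum_Ico_succ_top hn, ← add_assoc, ih, prod_Ico_succ_top hn, Nat.succ_sub (by omega),
      pow_succ]
    ring

section Cobweb

variable {α : Type*} {lvl : α → ℕ} {Φ : ℕ → Finset α}

theorem cobwebMu_self [DecidableEq α] (F : ℕ → ℕ) (x : α) : cobwebMu F lvl x x = 1 := by
  simp [cobwebMu]

theorem cobwebMu_of_lvl_lt [DecidableEq α] (F : ℕ → ℕ) {x z : α} (h : lvl x < lvl z) :
    cobwebMu F lvl x z =
      (-1) ^ (lvl z - lvl x) * ∏ i ∈ Ico (lvl x + 1) (lvl z), ((F i : ℤ) - 1) := by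
  have hxz : x ≠ z := fun hxz => (hxz ▸ h).false
  simp [cobwebMu, hxz, h]

theorem pairwiseDisjoint_levels (hΦ : ∀ (k : ℕ) (x : α), x ∈ Φ k ↔ lvl x = k)
    (s : Set ℕ) : s.PairwiseDisjoint Φ := by
  intro i _ j _ hij
  refine disjoint_left.2 fun z hzi hzj => hij ?_
  rw [← (hΦ i z).1 hzi, ← (hΦ j z).1 hzj]

theorem sum_cobwebMu_level [DecidableEq α] (hΦ : ∀ (k : ℕ) (x : α), x ∈ Φ k ↔ lvl x = k)
    (F : ℕ → ℕ) (hcard : ∀ k, (Φ k).card = F k) (x : α) {k : ℕ} (hk : lvl x < k) :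
    ∑ z ∈ Φ k, cobwebMu F lvl x z =
      F k * ((-1) ^ (k - lvl x) * ∏ i ∈ Ico (lvl x + 1) k, ((F i : ℤ) - 1)) := by
  have hconst : ∀ z ∈ Φ k, cobwebMu F lvl x z =
      (-1) ^ (k - lvl x) * ∏ i ∈ Ico (lvl x + 1) k, ((F i : ℤ) - 1) := by
    intro z hz
    rw [← (hΦ k z).1 hz] at hk ⊢
    exact cobwebMu_of_lvl_lt F hk
  rw [sum_congr rfl hconst, sum_const, hcard, nsmul_eq_mul]

theorem Ioo_eq_biUnion_levels [PartialOrder α] [LocallyFiniteOrder α] [DecidableEq α]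
    (hΦ : ∀ (k : ℕ) (x : α), x ∈ Φ k ↔ lvl x = k)
    (hord : ∀ x y : α, x < y ↔ lvl x < lvl y) (x y : α) :
    Ioo x y = (Ico (lvl x + 1) (lvl y)).biUnion Φ := by
  ext z
  simp only [mem_Ioo, mem_biUnion, mem_Ico, hord, hΦ, exists_eq_right']
  omega

end Cobweb

theorem cobweb_mu_inverse_zeta_general {α : Type*} [PartialOrder α] [LocallyFiniteOrder α]
    [DecidableEq α]
    (F : ℕ → ℕ)
    (lvl : α → ℕ) (Φ : ℕ → Finset α)
    (hord : ∀ x y : α, x < y ↔ lvl x < lvl y)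
    (hΦ : ∀ (k : ℕ) (x : α), x ∈ Φ k ↔ lvl x = k)
    (hcard : ∀ k : ℕ, (Φ k).card = F k)
    (x y : α) (hxy : x ≤ y) :
    ∑ z ∈ Finset.Icc x y, cobwebMu F lvl x z = if x = y then 1 else 0 := by
  rcases hxy.eq_or_lt with rfl | hlt
  · simp [cobwebMu_self]
  have hlvl : lvl x < lvl y := (hord x y).1 hlt
  rw [if_neg hlt.ne, Icc_eq_cons_Ico hxy, sum_cons, Ico_eq_cons_Ioo hlt, sum_cons,
    Ioo_eq_biUnion_levels hΦ hord, sum_biUnion (pairwiseDisjoint_levels hΦ _),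
    sum_congr rfl fun k hk => sum_cobwebMu_level hΦ F hcard x (mem_Ico.1 hk).1,
    cobwebMu_self, cobwebMu_of_lvl_lt F hlvl, one_add_sum_mul_alternating_prod _ hlvl]
  ring

/-- In a cobweb poset, the function `cobwebMu` is the convolution inverse of the
zeta function of the incidence algebra: `∑_{x ≤ z ≤ y} μ(x,z) = [x = y]`. -/
theorem cobweb_mu_inverse_zeta {α : Type*} [PartialOrder α] [LocallyFiniteOrder α]
    [DecidableEq α]
    (F : ℕ → ℕ) (hF : ∀ k, 0 < F k)
    (lvl : α → ℕ) (Φ : ℕ → Finset α)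
    (hord : ∀ x y : α, x < y ↔ lvl x < lvl y)
    (hΦ : ∀ (k : ℕ) (x : α), x ∈ Φ k ↔ lvl x = k)
    (hcard : ∀ k : ℕ, (Φ k).card = F k)
    (x y : α) (hxy : x ≤ y) :
    ∑ z ∈ Finset.Icc x y, cobwebMu F lvl x z = if x = y then 1 else 0 :=
  cobweb_mu_inverse_zeta_general F lvl Φ hord hΦ hcard x y hxy
end
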